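/- arXiv:1002.2388 — 4 statements merged into one kernel-verified Lean document; each statement's English description precedes it below -/
import Mathlib

section
/- For the ideal I = (X_1, X_2)D of D, the product IM satisfies (IM)^v = D, where (IM)^v = (D : (D : IM)) is the divisorial closure of IM. -/
open MvPolynomial FractionalIdeal

noncomputable section

variable (k : Type*) [Field k]

/-- The ideal `N = (X_1, X_2, ...)` of `R = k[X_1, X_2, ...]` generated by all the
indeterminates. -/
def bigN : Ideal (MvPolynomial ℕ k) := Ideal.span (Set.range MvPolynomial.X)

theorem bigN_eq_ker : bigN k = RingHom.ker (constantCoeff (σ := ℕ) (R := k)) := by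
  ext p
  rw [bigN, ← Set.image_univ, mem_ideal_span_X_image, RingHom.mem_ker]
  constructor
  · intro h
    rw [constantCoeff_eq]
    by_contra hc
    obtain ⟨i, _, hi⟩ := h 0 (mem_support_iff.mpr hc)
    simp at hi
  · intro h m hm
    rw [constantCoeff_eq] at h
    have hm0 : m ≠ 0 := by rintro rfl; exact mem_support_iff.mp hm h
    obtain ⟨i, hi⟩ := Finsupp.ne_iff.mp hm0
    exact ⟨i, trivial, by simpa using hi⟩

instance : (bigN k).IsMaximal := by
  rw [bigN_eq_ker]
  exact RingHom.ker_isMaximal_of_surjective _ (fun a => ⟨C a, by simp⟩)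

/-- `D`, the localization of `k[X_1, X_2, ...]` at the maximal ideal `N`. -/
abbrev bigD := Localization.AtPrime (bigN k)

/-- `K`, the fraction field of `D`. -/
abbrev bigK := FractionRing (bigD k)

/-- `M`, the maximal ideal of the local domain `D`. -/
def bigM : Ideal (bigD k) := IsLocalRing.maximalIdeal (bigD k)

attribute [-instance] instAlgebraAtPrimeFractionRing

/-! Every `x ∈ (D : IM)` satisfies `x X_i X_n ∈ D` for `i = 1, 2` and all `n`. The images of the
indeterminates in `D` are primes none of which divides another, and for a prime `p` not dividing
`q`, `y p, y q ∈ D` forces `y ∈ D`, since `p` divides `(y p) q = (y q) p` and hence `y p`.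
Applying this to `y = x X_i` with `(p, q) = (X_3, X_4)` gives `x X_1, x X_2 ∈ D`, and then to
`y = x` with `(p, q) = (X_1, X_2)` gives `x ∈ D`. So `(D : IM) = D` and `(IM)^v = D`. -/

open IsLocalization

section Localization

variable {R : Type*} [CommRing R] (M : Submonoid R) (S : Type*) [CommRing S] [Algebra R S]
  [IsLocalization M S]

theorem IsLocalization.algebraMap_dvd_algebraMap_iff {p : R} (hp : Prime p)
    (hd : Disjoint (M : Set R) (Ideal.span {p})) (q : R) :
    algebraMap R S p ∣ algebraMap R S q ↔ p ∣ q := by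
  have hP : (Ideal.span {p}).IsPrime := (Ideal.span_singleton_prime hp.ne_zero).mpr hp
  rw [← Ideal.mem_span_singleton, ← Ideal.mem_span_singleton, ← Set.image_singleton,
    ← Ideal.map_span, ← Ideal.mem_comap]
  exact SetLike.ext_iff.mp (under_map_of_isPrime_disjoint M S hP hd) q

theorem IsLocalization.prime_algebraMap [IsDomain R] {p : R} (hp : Prime p)
    (hd : Disjoint (M : Set R) (Ideal.span {p})) : Prime (algebraMap R S p) := by
  have hM : M ≤ nonZeroDivisors R :=
    le_nonZeroDivisors_of_noZeroDivisors fun h0 => Set.disjoint_left.mp hd h0 (Ideal.zero_mem _)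
  have hp0 : algebraMap R S p ≠ 0 :=
    (map_ne_zero_iff _ (IsLocalization.injective S hM)).mpr hp.ne_zero
  rw [← Ideal.span_singleton_prime hp0, ← Set.image_singleton, ← Ideal.map_span]
  exact isPrime_of_isPrime_disjoint M S _ ((Ideal.span_singleton_prime hp.ne_zero).mpr hp) hd

end Localization

section FractionRing

variable {A K : Type*} [CommRing A] [Field K] [Algebra A K] [IsFractionRing A K]

theorem IsFractionRing.isInteger_of_isInteger_mul_prime {p q : A} (hp : Prime p) (hpq : ¬p ∣ q)
    {y : K} (hyp : IsInteger A (y * algebraMap A K p)) (hyq : IsInteger A (y * algebraMap A K q)) :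
    IsInteger A y := by
  obtain ⟨a, ha⟩ := hyp
  obtain ⟨b, hb⟩ := hyq
  have hab : a * q = b * p := IsFractionRing.injective A K <| by
    rw [map_mul, map_mul, ha, hb, mul_right_comm]
  obtain ⟨c, rfl⟩ : p ∣ a := (hp.dvd_or_dvd ⟨b, by rw [hab, mul_comm]⟩).resolve_right hpq
  have hp0 : algebraMap A K p ≠ 0 :=
    (map_ne_zero_iff _ (IsFractionRing.injective A K)).mpr hp.ne_zero
  exact ⟨c, mul_right_cancel₀ hp0 (by rw [← ha, ← map_mul, mul_comm])⟩

theorem FractionalIdeal.one_div_coeIdeal_eq_one [IsDomain A] {𝔞 : Ideal A} (h0 : 𝔞 ≠ ⊥)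
    (h : ∀ x : K, (∀ a ∈ 𝔞, IsInteger A (x * algebraMap A K a)) → IsInteger A x) :
    (1 : FractionalIdeal (nonZeroDivisors A) K) / 𝔞 = 1 := by
  have h0' : (𝔞 : FractionalIdeal (nonZeroDivisors A) K) ≠ 0 := coeIdeal_ne_zero.mpr h0
  refine le_antisymm (fun x hx => (mem_one_iff _).mpr (h x fun a ha => ?_)) ?_
  · exact (mem_one_iff _).mp ((mem_div_iff_of_ne_zero h0').mp hx _ (mem_coeIdeal_of_mem _ ha))
  · rw [le_div_iff_mul_le h0', one_mul]
    exact coeIdeal_le_one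

end FractionRing

section Indeterminates

variable {k}

theorem X_mem_bigN (n : ℕ) : (X n : MvPolynomial ℕ k) ∈ bigN k :=
  Ideal.subset_span ⟨n, rfl⟩

theorem disjoint_primeCompl_span_X (n : ℕ) :
    Disjoint ((bigN k).primeCompl : Set (MvPolynomial ℕ k))
      (Ideal.span {(X n : MvPolynomial ℕ k)}) :=
  Set.disjoint_left.mpr fun _ hm hmX =>
    hm ((Ideal.span_singleton_le_iff_mem _).mpr (X_mem_bigN n) hmX)

theorem prime_algebraMap_X (n : ℕ) : Prime (algebraMap (MvPolynomial ℕ k) (bigD k) (X n)) :=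
  prime_algebraMap _ _ X_prime (disjoint_primeCompl_span_X n)

theorem algebraMap_X_dvd_algebraMap_X_iff {n m : ℕ} :
    algebraMap (MvPolynomial ℕ k) (bigD k) (X n) ∣
      algebraMap (MvPolynomial ℕ k) (bigD k) (X m) ↔ n = m := by
  rw [algebraMap_dvd_algebraMap_iff _ _ X_prime (disjoint_primeCompl_span_X n), X_dvd_X]

theorem algebraMap_X_mem_bigM (n : ℕ) :
    algebraMap (MvPolynomial ℕ k) (bigD k) (X n) ∈ bigM k :=
  (AtPrime.to_map_mem_maximal_iff _ (bigN k) _).mpr (X_mem_bigN n)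

theorem isInteger_of_isInteger_mul_X {x : bigK k} {n m : ℕ} (hnm : n ≠ m)
    (hn : IsInteger (bigD k) (x * algebraMap _ _ (algebraMap (MvPolynomial ℕ k) (bigD k) (X n))))
    (hm : IsInteger (bigD k) (x * algebraMap _ _ (algebraMap (MvPolynomial ℕ k) (bigD k) (X m)))) :
    IsInteger (bigD k) x :=
  IsFractionRing.isInteger_of_isInteger_mul_prime (prime_algebraMap_X n)
    (algebraMap_X_dvd_algebraMap_X_iff.not.mpr hnm) hn hm

end Indeterminates

/-- For the ideal `I = (X_1, X_2)D` of `D`, `(IM)^v = D`, where `(IM)^v = (D : (D : IM))` is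
the divisorial closure. -/
theorem v_of_IM (k : Type*) [Field k] :
    (1 : FractionalIdeal (nonZeroDivisors (bigD k)) (bigK k)) /
      (1 / (((Ideal.span {algebraMap (MvPolynomial ℕ k) (bigD k) (X 1),
                algebraMap (MvPolynomial ℕ k) (bigD k) (X 2)} : Ideal (bigD k)) :
              FractionalIdeal (nonZeroDivisors (bigD k)) (bigK k)) *
            ((bigM k : Ideal (bigD k)) :
              FractionalIdeal (nonZeroDivisors (bigD k)) (bigK k)))) = 1 := by
  set ξ : ℕ → bigD k := fun n => algebraMap (MvPolynomial ℕ k) (bigD k) (X n)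
  set I : Ideal (bigD k) := Ideal.span {ξ 1, ξ 2}
  have hmem : ∀ i n, i = 1 ∨ i = 2 → ξ i * ξ n ∈ I * bigM k := by
    intro i n hi
    refine Ideal.mul_mem_mul (Ideal.subset_span ?_) (algebraMap_X_mem_bigM n)
    rcases hi with rfl | rfl <;> simp
  have hIM : I * bigM k ≠ ⊥ := (Submodule.ne_bot_iff _).mpr
    ⟨_, hmem 1 1 (.inl rfl), mul_self_ne_zero.mpr (prime_algebraMap_X 1).ne_zero⟩
  rw [← coeIdeal_mul, one_div_coeIdeal_eq_one hIM ?_, FractionalIdeal.div_one]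
  intro x hx
  have hxξ : ∀ i, i = 1 ∨ i = 2 → IsInteger (bigD k) (x * algebraMap _ _ (ξ i)) :=
    fun i hi => isInteger_of_isInteger_mul_X (show 3 ≠ 4 by decide)
      (by rw [mul_assoc, ← map_mul]; exact hx _ (hmem i 3 hi))
      (by rw [mul_assoc, ← map_mul]; exact hx _ (hmem i 4 hi))
  exact isInteger_of_isInteger_mul_X (show 1 ≠ 2 by decide) (hxξ 1 (.inl rfl))
    (hxξ 2 (.inr rfl))
end
end

section
/- Let (D, M) be a local integral domain with fraction field K and let A be a nonzero proper ideal of D with A^v = D. Then for every nonzero y ∈ K with A ⊆ yM, either D ⊆ yM or yM = M. -/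
/-!
Since `A ⊆ yM` and `y⁻¹ · yM = M ⊆ D`, the element `y⁻¹` lies in `(D : A)`, and `A^v = D` forces
`(D : A) = D`. So `y⁻¹ = d ∈ D`: if `d ∈ M` then `1 = y d ∈ yM`; otherwise `d` is a unit and
`yM = M`.
-/

open FractionalIdeal

open scoped nonZeroDivisors

namespace FractionalIdeal

variable {R : Type*} [CommRing R] [IsDomain R] {K : Type*} [Field K] [Algebra R K]
  [IsFractionRing R K]

theorem one_div_le_one_of_one_div_one_div_eq_one {I : FractionalIdeal R⁰ K}
    (h : 1 / (1 / I) = 1) : 1 / I ≤ 1 :=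
  calc 1 / I = 1 / I * (1 / (1 / I)) := by rw [h, mul_one]
    _ ≤ 1 := mul_one_div_le_one

theorem inv_mem_one_div_of_le_spanSingleton_mul {I J : FractionalIdeal R⁰ K} {y : K}
    (hI : I ≠ 0) (hy : y ≠ 0) (hJ : J ≤ 1) (hIJ : I ≤ spanSingleton R⁰ y * J) :
    y⁻¹ ∈ 1 / I := by
  rw [mem_div_iff_of_ne_zero hI]
  intro a ha
  obtain ⟨b, hb, rfl⟩ := le_spanSingleton_mul_iff.mp hIJ a ha
  rw [inv_mul_cancel_left₀ hy]
  exact hJ hb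

theorem one_le_spanSingleton_mul_maximalIdeal_or_eq [IsLocalRing R] {y : K} (hy0 : y ≠ 0)
    (hy : y⁻¹ ∈ (1 : FractionalIdeal R⁰ K)) :
    1 ≤ spanSingleton R⁰ y * (IsLocalRing.maximalIdeal R : FractionalIdeal R⁰ K) ∨
      spanSingleton R⁰ y * (IsLocalRing.maximalIdeal R : FractionalIdeal R⁰ K) =
        (IsLocalRing.maximalIdeal R : FractionalIdeal R⁰ K) := by
  obtain ⟨d, hd⟩ := (mem_one_iff R⁰).mp hy
  by_cases hdM : d ∈ IsLocalRing.maximalIdeal R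
  · left
    rw [one_le, ← mul_inv_cancel₀ hy0, ← hd]
    exact mul_mem_mul (mem_spanSingleton_self _ y) ((mem_coeIdeal _).mpr ⟨d, hdM, rfl⟩)
  · right
    have hunit : spanSingleton R⁰ y⁻¹ = 1 := by
      rw [← hd, ← coeIdeal_span_singleton,
        Ideal.span_singleton_eq_top.mpr (IsLocalRing.notMem_maximalIdeal.mp hdM), coeIdeal_top]
    rw [← inv_inv y, ← spanSingleton_inv, hunit, inv_one, one_mul]

end FractionalIdeal

theorem contained_in_yM_general (D : Type*) [CommRing D] [IsDomain D] [IsLocalRing D]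
    (A : Ideal D) (hA0 : A ≠ ⊥)
    (hAv : (1 : FractionalIdeal (nonZeroDivisors D) (FractionRing D)) /
        (1 / (A : FractionalIdeal (nonZeroDivisors D) (FractionRing D))) = 1)
    (y : FractionRing D) (hy : y ≠ 0)
    (hAyM : (A : FractionalIdeal (nonZeroDivisors D) (FractionRing D)) ≤
        spanSingleton (nonZeroDivisors D) y *
          (IsLocalRing.maximalIdeal D : FractionalIdeal (nonZeroDivisors D) (FractionRing D))) :
    (1 : FractionalIdeal (nonZeroDivisors D) (FractionRing D)) ≤
        spanSingleton (nonZeroDivisors D) y *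
          (IsLocalRing.maximalIdeal D : FractionalIdeal (nonZeroDivisors D) (FractionRing D)) ∨
      spanSingleton (nonZeroDivisors D) y *
          (IsLocalRing.maximalIdeal D : FractionalIdeal (nonZeroDivisors D) (FractionRing D)) =
        (IsLocalRing.maximalIdeal D :
          FractionalIdeal (nonZeroDivisors D) (FractionRing D)) :=
  one_le_spanSingleton_mul_maximalIdeal_or_eq hy <| one_div_le_one_of_one_div_one_div_eq_one hAv <|
    inv_mem_one_div_of_le_spanSingleton_mul (coeIdeal_ne_zero.mpr hA0) hy coeIdeal_le_one hAyM

/-- Let `(D, M)` be a local integral domain with fraction field `K` and `A` a nonzero proper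
ideal of `D` with `A^v = D`.  Then for every nonzero `y ∈ K` with `A ⊆ yM`, either `D ⊆ yM`
or `yM = M`. -/
theorem contained_in_yM (D : Type*) [CommRing D] [IsDomain D] [IsLocalRing D]
    (A : Ideal D) (hA0 : A ≠ ⊥) (hAtop : A ≠ ⊤)
    (hAv : (1 : FractionalIdeal (nonZeroDivisors D) (FractionRing D)) /
        (1 / (A : FractionalIdeal (nonZeroDivisors D) (FractionRing D))) = 1)
    (y : FractionRing D) (hy : y ≠ 0)
    (hAyM : (A : FractionalIdeal (nonZeroDivisors D) (FractionRing D)) ≤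
        spanSingleton (nonZeroDivisors D) y *
          (IsLocalRing.maximalIdeal D : FractionalIdeal (nonZeroDivisors D) (FractionRing D))) :
    (1 : FractionalIdeal (nonZeroDivisors D) (FractionRing D)) ≤
        spanSingleton (nonZeroDivisors D) y *
          (IsLocalRing.maximalIdeal D : FractionalIdeal (nonZeroDivisors D) (FractionRing D)) ∨
      spanSingleton (nonZeroDivisors D) y *
          (IsLocalRing.maximalIdeal D : FractionalIdeal (nonZeroDivisors D) (FractionRing D)) =
        (IsLocalRing.maximalIdeal D :
          FractionalIdeal (nonZeroDivisors D) (FractionRing D)) :=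
  contained_in_yM_general D A hA0 hAv y hy hAyM
end

section
/- Let (D, M) be a local integral domain with fraction field K and let A be a nonzero proper ideal of D with A^v = D and A ⊆ M². Then for every nonzero z ∈ K with A ⊆ zM², either zM² = M² or M ⊆ zM². -/
/-! Since `A^v = D`, the dual `(D : A)` is contained in `D`; as `z⁻¹A ⊆ M² ⊆ D`, this puts `z⁻¹`
in `D`. If `z⁻¹` is a unit then `zM² = M²`; otherwise `z⁻¹ ∈ M`, so `z⁻¹M ⊆ M²`, i.e.
`M ⊆ zM²`. -/

open FractionalIdeal
open scoped nonZeroDivisors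

namespace FractionalIdeal

variable {R K : Type*} [CommRing R] [Field K] [Algebra R K] [IsFractionRing R K]

theorem spanSingleton_algebraMap_mul_le {d : R} {I : Ideal R} (hd : d ∈ I) (J : Ideal R) :
    spanSingleton R⁰ (algebraMap R K d) * (J : FractionalIdeal R⁰ K) ≤
      ((I * J : Ideal R) : _) := by
  rw [← coeIdeal_span_singleton, ← coeIdeal_mul]
  exact (coeIdeal_le_coeIdeal K).mpr
    (Ideal.mul_mono_left ((Ideal.span_singleton_le_iff_mem _).mpr hd))

variable [IsDomain R]

theorem le_one_of_one_div_eq_one {J : FractionalIdeal R⁰ K} (h : 1 / J = 1) : J ≤ 1 := by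
  have hJ : J ≠ 0 := by
    rintro rfl
    exact zero_ne_one (div_zero.symm.trans h)
  simpa using (le_div_iff_mul_le hJ).mp h.ge

theorem mem_one_of_spanSingleton_mul_le_one {I : FractionalIdeal R⁰ K} (hI : I ≠ 0)
    (hIv : 1 / (1 / I) = 1) {x : K} (hx : spanSingleton R⁰ x * I ≤ 1) :
    x ∈ (1 : FractionalIdeal R⁰ K) :=
  le_one_of_one_div_eq_one hIv (spanSingleton_le_iff_mem.mp ((le_div_iff_mul_le hI).mpr hx))

theorem spanSingleton_eq_one_or_le_spanSingleton_mul_maximalIdeal_mul [IsLocalRing R] {z : K}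
    (hz : z ≠ 0) (hz' : z⁻¹ ∈ (1 : FractionalIdeal R⁰ K)) (I : Ideal R) :
    spanSingleton R⁰ z = 1 ∨
      (I : FractionalIdeal R⁰ K) ≤
        spanSingleton R⁰ z * ((IsLocalRing.maximalIdeal R * I : Ideal R) : _) := by
  obtain ⟨d, hd⟩ := (mem_one_iff _).mp hz'
  by_cases hu : IsUnit d
  · left
    rw [← spanSingleton_one, spanSingleton_eq_spanSingleton]
    exact ⟨hu.unit, by
      rw [Units.smul_def, IsUnit.unit_spec, Algebra.smul_def, hd, inv_mul_cancel₀ hz]⟩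
  · right
    calc (I : FractionalIdeal R⁰ K)
        = spanSingleton R⁰ z * (spanSingleton R⁰ z⁻¹ * I) := by
          rw [← mul_assoc, spanSingleton_mul_spanSingleton, mul_inv_cancel₀ hz, spanSingleton_one,
            one_mul]
      _ ≤ _ := by
          rw [← hd]
          gcongr
          exact spanSingleton_algebraMap_mul_le ((IsLocalRing.mem_maximalIdeal d).mpr hu) I

end FractionalIdeal

theorem contained_in_zM2_general (D : Type*) [CommRing D] [IsDomain D] [IsLocalRing D]
    (A : Ideal D) (hA0 : A ≠ ⊥)
    (hAv : (1 : FractionalIdeal (nonZeroDivisors D) (FractionRing D)) /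
        (1 / (A : FractionalIdeal (nonZeroDivisors D) (FractionRing D))) = 1)
    (z : FractionRing D) (hz : z ≠ 0)
    (hAzM2 : (A : FractionalIdeal (nonZeroDivisors D) (FractionRing D)) ≤
        spanSingleton (nonZeroDivisors D) z *
          (IsLocalRing.maximalIdeal D :
            FractionalIdeal (nonZeroDivisors D) (FractionRing D)) ^ 2) :
    spanSingleton (nonZeroDivisors D) z *
          (IsLocalRing.maximalIdeal D :
            FractionalIdeal (nonZeroDivisors D) (FractionRing D)) ^ 2 =
        (IsLocalRing.maximalIdeal D :
          FractionalIdeal (nonZeroDivisors D) (FractionRing D)) ^ 2 ∨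
      (IsLocalRing.maximalIdeal D : FractionalIdeal (nonZeroDivisors D) (FractionRing D)) ≤
        spanSingleton (nonZeroDivisors D) z *
          (IsLocalRing.maximalIdeal D :
            FractionalIdeal (nonZeroDivisors D) (FractionRing D)) ^ 2 := by
  have hzinv : z⁻¹ ∈ (1 : FractionalIdeal D⁰ (FractionRing D)) := by
    refine mem_one_of_spanSingleton_mul_le_one (coeIdeal_ne_zero.mpr hA0) hAv ?_
    calc spanSingleton D⁰ z⁻¹ * A
        ≤ spanSingleton D⁰ z⁻¹ * (spanSingleton D⁰ z * (IsLocalRing.maximalIdeal D : _) ^ 2) := by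
          gcongr
      _ = ((IsLocalRing.maximalIdeal D ^ 2 : Ideal D) : FractionalIdeal D⁰ (FractionRing D)) := by
          rw [← mul_assoc, spanSingleton_mul_spanSingleton, inv_mul_cancel₀ hz, spanSingleton_one,
            one_mul, coeIdeal_pow]
      _ ≤ 1 := coeIdeal_le_one
  rcases spanSingleton_eq_one_or_le_spanSingleton_mul_maximalIdeal_mul hz hzinv
    (IsLocalRing.maximalIdeal D) with h | h
  · left
    rw [h, one_mul]
  · right
    rwa [coeIdeal_mul, ← sq] at h

/-- Let `(D, M)` be a local integral domain with fraction field `K` and `A` a nonzero proper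
ideal of `D` with `A^v = D` and `A ⊆ M²`.  Then for every nonzero `z ∈ K` with `A ⊆ zM²`,
either `zM² = M²` or `M ⊆ zM²`. -/
theorem contained_in_zM2 (D : Type*) [CommRing D] [IsDomain D] [IsLocalRing D]
    (A : Ideal D) (hA0 : A ≠ ⊥) (hAtop : A ≠ ⊤)
    (hAv : (1 : FractionalIdeal (nonZeroDivisors D) (FractionRing D)) /
        (1 / (A : FractionalIdeal (nonZeroDivisors D) (FractionRing D))) = 1)
    (hAM2 : A ≤ IsLocalRing.maximalIdeal D ^ 2)
    (z : FractionRing D) (hz : z ≠ 0)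
    (hAzM2 : (A : FractionalIdeal (nonZeroDivisors D) (FractionRing D)) ≤
        spanSingleton (nonZeroDivisors D) z *
          (IsLocalRing.maximalIdeal D :
            FractionalIdeal (nonZeroDivisors D) (FractionRing D)) ^ 2) :
    spanSingleton (nonZeroDivisors D) z *
          (IsLocalRing.maximalIdeal D :
            FractionalIdeal (nonZeroDivisors D) (FractionRing D)) ^ 2 =
        (IsLocalRing.maximalIdeal D :
          FractionalIdeal (nonZeroDivisors D) (FractionRing D)) ^ 2 ∨
      (IsLocalRing.maximalIdeal D : FractionalIdeal (nonZeroDivisors D) (FractionRing D)) ≤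
        spanSingleton (nonZeroDivisors D) z *
          (IsLocalRing.maximalIdeal D :
            FractionalIdeal (nonZeroDivisors D) (FractionRing D)) ^ 2 :=
  contained_in_zM2_general D A hA0 hAv z hz hAzM2
end

section
/- For the ideal I = (X_1, X_2)D of D, both (I²)^∗ = M² and (I³)^∗ = M², where E^∗ := ⋂{J ∈ 𝒥 : E ⊆ J}. -/
/-! `M² = 1 · M²` belongs to `𝒥` and contains `Iⁿ` for `n ≥ 2`, so `(Iⁿ)^∗ ⊆ M²`. Conversely,
let `J = xP ∈ 𝒥`, with `P ∈ {D, M, M²}`, contain `Iⁿ`. Then `x⁻¹X₁ⁿ` and `x⁻¹X₂ⁿ` lie in `D`.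
Since `X₁ⁿ` and `X₂ⁿ` are coprime in the UFD `k[X₁, X₂, …]`, writing `x⁻¹ = f/g` in lowest
terms shows that `g` divides an element of `S = R ∖ N`, so `x⁻¹ ∈ D` and `M² = x · x⁻¹M² ⊆ xP`. -/

open MvPolynomial FractionalIdeal

noncomputable section

variable (k : Type*) [Field k]

/-- The maximal ideal `M` of `D`, viewed as a fractional ideal of `D`. -/
def bigMF : FractionalIdeal (nonZeroDivisors (bigD k)) (bigK k) :=
  ((bigM k : Ideal (bigD k)) : FractionalIdeal (nonZeroDivisors (bigD k)) (bigK k))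

attribute [local instance high] Algebra.toModule

/-- The set `𝒥` of all fractional ideals of `D` of the form `xD`, `yM` or `zM²`, with
`x, y, z` nonzero elements of `K` (viewed as `D`-submodules of `K`). -/
def Jset : Set (Submodule (bigD k) (bigK k)) :=
  {J | ∃ x : bigK k, x ≠ 0 ∧
    (J = Submodule.span (bigD k) {x} ∨
     J = Submodule.span (bigD k) {x} * (bigMF k : Submodule (bigD k) (bigK k)) ∨
     J = Submodule.span (bigD k) {x} * (bigMF k : Submodule (bigD k) (bigK k)) ^ 2)}

/-- The operation `E^∗ := ⋂ {J ∈ 𝒥 : E ⊆ J}`. -/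
def starJ (E : Submodule (bigD k) (bigK k)) : Submodule (bigD k) (bigK k) :=
  sInf {J | J ∈ Jset k ∧ E ≤ J}

theorem IsRelPrime.dvd_of_dvd_mul_of_dvd_mul {α : Type*} [CommMonoidWithZero α]
    [IsCancelMulZero α] [DecompositionMonoid α] {a b c g : α} (hab : IsRelPrime a b)
    (ha : g ∣ a * c) (hb : g ∣ b * c) : g ∣ c := by
  obtain ⟨g₁, g₂, hg₁, ⟨c', rfl⟩, rfl⟩ := exists_dvd_and_dvd_of_dvd_mul ha
  rcases eq_or_ne g₂ 0 with rfl | hg₂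
  · simp
  have hb' : g₁ ∣ b * c' :=
    (mul_dvd_mul_iff_right hg₂).mp (by rwa [← mul_assoc, mul_right_comm] at hb)
  simpa [mul_comm] using mul_dvd_mul_right ((hab.of_dvd_left hg₁).dvd_of_dvd_mul_left hb') g₂

section Localization

variable {R : Type*} [CommRing R] (S : Submonoid R) {D K : Type*} [CommRing D] [Algebra R D]
  [IsLocalization S D] [Field K] [Algebra R K] [IsFractionRing R K] [Algebra D K]
  [IsScalarTower R D K]

include S in
theorem IsLocalization.exists_mem_dvd_mul_of_mk'_mul_mem_range [DecompositionMonoid R] {f : R}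
    {g : nonZeroDivisors R} (hfg : IsRelPrime f g) {c : R}
    (hc : IsLocalization.mk' K f g * algebraMap R K c ∈ (algebraMap D K).range) :
    ∃ s ∈ S, (g : R) ∣ c * s := by
  obtain ⟨d, hd⟩ := hc
  obtain ⟨⟨r, s⟩, hrs⟩ := IsLocalization.surj S d
  have hK : algebraMap R K (f * (c * s)) = algebraMap R K (r * g) := by
    have := congrArg (algebraMap D K) hrs
    rw [map_mul, hd, ← IsScalarTower.algebraMap_apply, ← IsScalarTower.algebraMap_apply] at this
    rw [map_mul, map_mul, map_mul, ← this, ← IsLocalization.mk'_spec K f g]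
    ring
  refine ⟨s, s.2, hfg.symm.dvd_of_dvd_mul_left ?_⟩
  rw [IsFractionRing.injective R K hK]
  exact dvd_mul_left _ _

include S in
theorem IsLocalization.mem_range_of_mul_mem_range_of_isRelPrime [IsDomain R]
    [UniqueFactorizationMonoid R] {a b : R} (hab : IsRelPrime a b)
    {v : K} (ha : v * algebraMap R K a ∈ (algebraMap D K).range)
    (hb : v * algebraMap R K b ∈ (algebraMap D K).range) : v ∈ (algebraMap D K).range := by
  obtain ⟨f, g, hfg, rfl⟩ := IsFractionRing.exists_reduced_fraction R v
  obtain ⟨s, hs, hgs⟩ := exists_mem_dvd_mul_of_mk'_mul_mem_range S hfg ha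
  obtain ⟨t, ht, hgt⟩ := exists_mem_dvd_mul_of_mk'_mul_mem_range S hfg hb
  obtain ⟨h, hh⟩ : (g : R) ∣ s * t := hab.dvd_of_dvd_mul_of_dvd_mul
    (by simpa only [mul_assoc] using hgs.mul_right t)
    (by simpa only [mul_assoc, mul_comm s] using hgt.mul_right s)
  have hst : IsUnit (algebraMap R K (s * t)) := by
    rw [IsScalarTower.algebraMap_apply R D K]
    exact (IsLocalization.map_units D ⟨s * t, mul_mem hs ht⟩).map _
  refine ⟨IsLocalization.mk' D (f * h) ⟨s * t, mul_mem hs ht⟩, hst.mul_left_injective ?_⟩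
  calc _ = algebraMap R K (f * h) := by
        dsimp only
        rw [IsScalarTower.algebraMap_apply R D K (s * t), ← map_mul, IsLocalization.mk'_spec,
          ← IsScalarTower.algebraMap_apply]
    _ = IsLocalization.mk' K f g * algebraMap R K (s * t) := by
        rw [hh, map_mul, map_mul, ← mul_assoc, IsLocalization.mk'_spec]

end Localization

theorem Submodule.le_span_singleton_mul_of_inv_mem_one {D K : Type*} [CommRing D] [Field K]
    [Algebra D K] {x : K} (hx : x ≠ 0) (hx' : x⁻¹ ∈ (1 : Submodule D K))
    {P Q : Submodule D K} (hQP : Q ≤ P) : Q ≤ span D {x} * P := by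
  intro q hq
  rw [← mul_inv_cancel_left₀ hx q]
  refine mul_mem_mul (mem_span_singleton_self x) (hQP ?_)
  simpa only [one_mul] using mul_mem_mul hx' hq

theorem MvPolynomial.isRelPrime_X_pow_X_pow {σ R : Type*} [CommRing R] [IsDomain R]
    [UniqueFactorizationMonoid R] {i j : σ} (hij : i ≠ j) (m n : ℕ) :
    IsRelPrime (X i ^ m : MvPolynomial σ R) (X j ^ n) :=
  ((X_prime.irreducible.isRelPrime_iff_not_dvd).mpr (by simpa using hij)).pow

-- Instance search gives `bigK` the `bigD`-algebra structure `instAlgebraAtPrimeFractionRing`,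
-- which is only propositionally equal to the `OreLocalization` one; the tower refers to the former.
instance : @IsScalarTower (MvPolynomial ℕ k) (bigD k) (bigK k) Algebra.toSMul Algebra.toSMul
    Algebra.toSMul :=
  IsScalarTower.of_algebraMap_eq fun _ => (IsLocalization.lift_eq _ _).symm

instance : IsFractionRing (MvPolynomial ℕ k) (bigK k) := by
  let _ : Algebra (bigD k) (bigK k) := OreLocalization.instAlgebra
  exact IsLocalization.isLocalization_of_algEquiv _
    ((IsLocalization.algEquiv (nonZeroDivisors (bigD k)) (FractionRing (MvPolynomial ℕ k))
      (bigK k)).restrictScalars (MvPolynomial ℕ k))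

def bigI : Ideal (bigD k) := Ideal.span {algebraMap (MvPolynomial ℕ k) (bigD k) (X 1),
  algebraMap (MvPolynomial ℕ k) (bigD k) (X 2)}

theorem bigI_le_bigM : bigI k ≤ bigM k := by
  refine Ideal.span_le.mpr (Set.insert_subset_iff.mpr ⟨?_, Set.singleton_subset_iff.mpr ?_⟩) <;>
  exact (IsLocalization.AtPrime.to_map_mem_maximal_iff (bigD k) (bigN k) _).mpr
    (Ideal.subset_span (Set.mem_range_self _))

theorem coe_bigI_pow_le_bigMF_sq {n : ℕ} (hn : 2 ≤ n) :
    (((bigI k ^ n : Ideal (bigD k)) : FractionalIdeal (nonZeroDivisors (bigD k)) (bigK k)) :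
      Submodule (bigD k) (bigK k)) ≤ (bigMF k : Submodule (bigD k) (bigK k)) ^ 2 := by
  rw [bigMF, ← FractionalIdeal.coe_pow, ← coeIdeal_pow]
  exact IsLocalization.coeSubmodule_mono _
    ((Ideal.pow_right_mono (bigI_le_bigM k) n).trans (Ideal.pow_le_pow_right hn))

theorem inv_mem_one_of_coe_bigI_pow_le_span_singleton (n : ℕ) {y : bigK k} (hy : y ≠ 0)
    (hIy : (((bigI k ^ n : Ideal (bigD k)) :
      FractionalIdeal (nonZeroDivisors (bigD k)) (bigK k)) : Submodule (bigD k) (bigK k)) ≤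
        Submodule.span (bigD k) {y}) :
    y⁻¹ ∈ (1 : Submodule (bigD k) (bigK k)) := by
  have hX (i : ℕ) (hi : algebraMap (MvPolynomial ℕ k) (bigD k) (X i) ∈ bigI k) :
      y⁻¹ * algebraMap (MvPolynomial ℕ k) (bigK k) (X i ^ n) ∈
        (algebraMap (bigD k) (bigK k)).range := by
    obtain ⟨d, hd⟩ := Submodule.mem_span_singleton.mp
      (hIy (FractionalIdeal.mem_coeIdeal_of_mem _ (Ideal.pow_mem_pow hi n)))
    refine ⟨d, ?_⟩
    rw [IsScalarTower.algebraMap_apply (MvPolynomial ℕ k) (bigD k), map_pow, ← hd,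
      Algebra.smul_def, mul_comm _ y, inv_mul_cancel_left₀ hy]
  rw [Submodule.mem_one]
  exact IsLocalization.mem_range_of_mul_mem_range_of_isRelPrime (bigN k).primeCompl
    (isRelPrime_X_pow_X_pow (by norm_num) n n) (hX 1 (Ideal.subset_span (by simp)))
    (hX 2 (Ideal.subset_span (by simp)))

theorem starJ_eq_bigMF_sq {E : Submodule (bigD k) (bigK k)}
    (hE : E ≤ (bigMF k : Submodule (bigD k) (bigK k)) ^ 2)
    (hinv : ∀ y : bigK k, y ≠ 0 → E ≤ Submodule.span (bigD k) {y} →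
      y⁻¹ ∈ (1 : Submodule (bigD k) (bigK k))) :
    starJ k E = (bigMF k : Submodule (bigD k) (bigK k)) ^ 2 := by
  set M := (bigMF k : Submodule (bigD k) (bigK k))
  have hM1 : M ≤ 1 := (coe_le_coe.mpr coeIdeal_le_one).trans_eq coe_one
  have hM2 : M ^ 2 ≤ M := by
    simpa only [sq, mul_one] using mul_le_mul_right hM1 M
  refine le_antisymm (sInf_le ⟨⟨1, one_ne_zero, .inr (.inr ?_)⟩, hE⟩) (le_sInf ?_)
  · rw [← Submodule.one_eq_span, one_mul]
  rintro J ⟨⟨x, hx, hJ⟩, hEJ⟩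
  obtain ⟨P, hP1, hMP, rfl⟩ :
      ∃ P, P ≤ 1 ∧ M ^ 2 ≤ P ∧ J = Submodule.span (bigD k) {x} * P := by
    rcases hJ with rfl | rfl | rfl
    · exact ⟨1, le_rfl, hM2.trans hM1, (mul_one _).symm⟩
    · exact ⟨M, hM1, hM2, rfl⟩
    · exact ⟨M ^ 2, hM2.trans hM1, le_rfl, rfl⟩
  refine Submodule.le_span_singleton_mul_of_inv_mem_one hx (hinv x hx ?_) hMP
  simpa only [mul_one] using hEJ.trans (mul_le_mul_right hP1 _)

theorem starJ_coe_bigI_pow {n : ℕ} (hn : 2 ≤ n) :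
    starJ k (((bigI k ^ n : Ideal (bigD k)) :
      FractionalIdeal (nonZeroDivisors (bigD k)) (bigK k)) : Submodule (bigD k) (bigK k)) =
      ((bigMF k ^ 2 : FractionalIdeal (nonZeroDivisors (bigD k)) (bigK k)) :
        Submodule (bigD k) (bigK k)) := by
  rw [FractionalIdeal.coe_pow]
  exact starJ_eq_bigMF_sq k (coe_bigI_pow_le_bigMF_sq k hn)
    fun _ hy => inv_mem_one_of_coe_bigI_pow_le_span_singleton k n hy

/-- For the ideal `I = (X_1, X_2)D` of `D`, both `(I²)^∗ = M²` and `(I³)^∗ = M²`, where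
`E^∗ := ⋂ {J ∈ 𝒥 : E ⊆ J}`. -/
theorem starJ_I2_I3 :
    starJ k ((((Ideal.span {algebraMap (MvPolynomial ℕ k) (bigD k) (X 1),
            algebraMap (MvPolynomial ℕ k) (bigD k) (X 2)} : Ideal (bigD k)) ^ 2 :
              Ideal (bigD k)) :
            FractionalIdeal (nonZeroDivisors (bigD k)) (bigK k)) :
              Submodule (bigD k) (bigK k)) =
        ((bigMF k ^ 2 : FractionalIdeal (nonZeroDivisors (bigD k)) (bigK k)) :
          Submodule (bigD k) (bigK k)) ∧
    starJ k ((((Ideal.span {algebraMap (MvPolynomial ℕ k) (bigD k) (X 1),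
            algebraMap (MvPolynomial ℕ k) (bigD k) (X 2)} : Ideal (bigD k)) ^ 3 :
              Ideal (bigD k)) :
            FractionalIdeal (nonZeroDivisors (bigD k)) (bigK k)) :
              Submodule (bigD k) (bigK k)) =
        ((bigMF k ^ 2 : FractionalIdeal (nonZeroDivisors (bigD k)) (bigK k)) :
          Submodule (bigD k) (bigK k)) :=
  ⟨starJ_coe_bigI_pow k le_rfl, starJ_coe_bigI_pow k (by norm_num)⟩
end
end
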